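/- arXiv:1008.0583 — 3 statements merged into one kernel-verified Lean document; each statement's English description precedes it below -/
import Mathlib

section
/- Let F, G, H, P ∈ k[x,y] be nonzero homogeneous polynomials such that P and H have no common factor. Then δ(PF, PG, H) = δ(F,G,H). -/
open MvPolynomial Classical

noncomputable section

/-- A syzygy of `(F,G,H)` of degree `m`. -/
def IsSyzOfDeg {k : Type*} [Field k] (F G H : MvPolynomial (Fin 2) k) (m : ℕ) : Prop :=
  ∃ a b c : MvPolynomial (Fin 2) k,
    ¬(a = 0 ∧ b = 0 ∧ c = 0) ∧
    a * F + b * G + c * H = 0 ∧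
    (a * F).IsHomogeneous m ∧ (b * G).IsHomogeneous m ∧ (c * H).IsHomogeneous m

/-- `m(F,G,H)`: least degree of a syzygy of `(F,G,H)`. -/
def minSyzDeg {k : Type*} [Field k] (F G H : MvPolynomial (Fin 2) k) : ℕ :=
  sInf {m | IsSyzOfDeg F G H m}

/-- `δ(F,G,H) = deg F + deg G + deg H - 2 m(F,G,H)`. -/
def sdelta {k : Type*} [Field k] (F G H : MvPolynomial (Fin 2) k) : ℤ :=
  (F.totalDegree : ℤ) + G.totalDegree + H.totalDegree - 2 * (minSyzDeg F G H : ℤ)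

/-- Pairwise prime linear forms. -/
def PairwisePrimeLinear {k : Type*} [Field k] {n : ℕ} (ℓ : Fin n → MvPolynomial (Fin 2) k) : Prop :=
  (∀ i, ℓ i ≠ 0 ∧ (ℓ i).IsHomogeneous 1) ∧
  ∀ i j, i ≠ j → ∀ P : MvPolynomial (Fin 2) k, P ∣ ℓ i → P ∣ ℓ j → IsUnit P

/-- A cell with respect to the linear forms `ℓ`. -/
def IsCell {k : Type*} [Field k] {n : ℕ} (ℓ : Fin n → MvPolynomial (Fin 2) k)
    (F G H : MvPolynomial (Fin 2) k) : Prop :=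
  F ≠ 0 ∧ G ≠ 0 ∧ H ≠ 0 ∧
  (∃ d, F.IsHomogeneous d) ∧ (∃ d, G.IsHomogeneous d) ∧ (∃ d, H.IsHomogeneous d) ∧
  ∀ P : MvPolynomial (Fin 2) k, P ∣ F → P ∣ G → P ∣ (H * ∏ i, ℓ i) → IsUnit P

/-- Membership in `𝓘ⁿ = ([0,1] ∩ ℤ[1/p])ⁿ`. -/
def InI (p : ℕ) {n : ℕ} (t : Fin n → ℚ) : Prop :=
  ∃ e : ℕ, ∃ a : Fin n → ℕ, (∀ i, a i ≤ p ^ e) ∧ ∀ i, t i = (a i : ℚ) / (p ^ e : ℚ)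

/-- The syzygy gap fractal `δ_C : 𝓘ⁿ → ℚ` (extended by `0` off `𝓘ⁿ`). -/
def deltaC (p : ℕ) {k : Type*} [Field k] {n : ℕ} (ℓ : Fin n → MvPolynomial (Fin 2) k)
    (F G H : MvPolynomial (Fin 2) k) (t : Fin n → ℚ) : ℚ :=
  if h : InI p t then
    ((sdelta (F ^ p ^ h.choose) (G ^ p ^ h.choose)
        (H ^ p ^ h.choose * ∏ i, ℓ i ^ h.choose_spec.choose i) : ℤ) : ℚ) / (p ^ h.choose : ℚ)
  else 0

/-- Taxi-cab distance. -/
def taxi {n : ℕ} (t u : Fin n → ℚ) : ℚ := ∑ i, |t i - u i|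


/-- Cancellation of a nonzero homogeneous factor. -/
lemma homog_cancel {k : Type*} [Field k] {P Q : MvPolynomial (Fin 2) k} {d n : ℕ}
    (hP : P.IsHomogeneous d) (hP0 : P ≠ 0) (hQ0 : Q ≠ 0)
    (h : (P * Q).IsHomogeneous n) : d ≤ n ∧ Q.IsHomogeneous (n - d) := by
  obtain ⟨j, hj⟩ : ∃ j, homogeneousComponent j Q ≠ 0 := by
    by_contra hc
    push_neg at hc
    apply hQ0
    rw [← Q.sum_homogeneousComponent]
    exact Finset.sum_eq_zero fun i _ => hc i
  have hjle : j ≤ Q.totalDegree := by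
    by_contra hgt
    exact hj (homogeneousComponent_eq_zero _ _ (lt_of_not_ge hgt))
  have key : homogeneousComponent (d + j) (P * Q) = P * homogeneousComponent j Q := by
    conv_lhs => rw [← Q.sum_homogeneousComponent, Finset.mul_sum, map_sum]
    rw [Finset.sum_eq_single j]
    · have hmem : P * homogeneousComponent j Q ∈ homogeneousSubmodule (Fin 2) k (d + j) := by
        rw [mem_homogeneousSubmodule]
        exact hP.mul (homogeneousComponent_isHomogeneous j Q)
      rw [homogeneousComponent_of_mem hmem, if_pos rfl]
    · intro i _ hij
      have hmem : P * homogeneousComponent i Q ∈ homogeneousSubmodule (Fin 2) k (d + i) := by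
        rw [mem_homogeneousSubmodule]
        exact hP.mul (homogeneousComponent_isHomogeneous i Q)
      rw [homogeneousComponent_of_mem hmem, if_neg (by omega)]
    · intro hjn
      exact absurd (Finset.mem_range.mpr (by omega)) hjn
  have key2 : homogeneousComponent (d + j) (P * Q) = if d + j = n then P * Q else 0 :=
    homogeneousComponent_of_mem ((mem_homogeneousSubmodule _ _).mpr h)
  have hPQj : P * homogeneousComponent j Q ≠ 0 := mul_ne_zero hP0 hj
  by_cases hdn : d + j = n
  · have hQeq : P * Q = P * homogeneousComponent j Q := by
      rw [← key, key2, if_pos hdn]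
    have : Q = homogeneousComponent j Q := mul_left_cancel₀ hP0 hQeq
    constructor
    · omega
    · rw [this]
      have := homogeneousComponent_isHomogeneous j Q
      rwa [show n - d = j by omega]
  · exfalso
    apply hPQj
    rw [← key, key2, if_neg hdn]

lemma syz_forward {k : Type*} [Field k] {F G H P : MvPolynomial (Fin 2) k} {dP m : ℕ}
    (hP' : P.IsHomogeneous dP) (hP0 : P ≠ 0)
    (h : IsSyzOfDeg F G H m) : IsSyzOfDeg (P * F) (P * G) H (m + dP) := by
  obtain ⟨a, b, c, hne, heq, ha, hb, hc⟩ := h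
  refine ⟨a, b, P * c, ?_, ?_, ?_, ?_, ?_⟩
  · rintro ⟨ha0, hb0, hc0⟩
    rcases mul_eq_zero.mp hc0 with h' | h'
    · exact hP0 h'
    · exact hne ⟨ha0, hb0, h'⟩
  · linear_combination P * heq
  · have : a * (P * F) = P * (a * F) := by ring
    rw [this, add_comm]
    exact hP'.mul ha
  · have : b * (P * G) = P * (b * G) := by ring
    rw [this, add_comm]
    exact hP'.mul hb
  · have : P * c * H = P * (c * H) := by ring
    rw [this, add_comm]
    exact hP'.mul hc

lemma syz_backward {k : Type*} [Field k] {F G H P : MvPolynomial (Fin 2) k} {dP m : ℕ}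
    (hP' : P.IsHomogeneous dP) (hP0 : P ≠ 0) (hF0 : F ≠ 0) (hG0 : G ≠ 0) (hH0 : H ≠ 0)
    (hcop : ∀ Q : MvPolynomial (Fin 2) k, Q ∣ P → Q ∣ H → IsUnit Q)
    (h : IsSyzOfDeg (P * F) (P * G) H m) : dP ≤ m ∧ IsSyzOfDeg F G H (m - dP) := by
  obtain ⟨a, b, c, hne, heq, ha, hb, hc⟩ := h
  -- P divides c
  have hdvd : P ∣ c * H := ⟨-(a * F + b * G), by linear_combination heq⟩
  have hrel : IsRelPrime P H := fun Q hQP hQH => hcop Q hQP hQH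
  obtain ⟨c', hc'⟩ := hrel.dvd_of_dvd_mul_right hdvd
  have heq' : a * F + b * G + c' * H = 0 := by
    have : P * (a * F + b * G + c' * H) = 0 := by
      rw [hc'] at heq
      linear_combination heq
    rcases mul_eq_zero.mp this with h' | h'
    · exact absurd h' hP0
    · exact h'
  have hne' : ¬(a = 0 ∧ b = 0 ∧ c' = 0) := by
    rintro ⟨ha0, hb0, hc0⟩
    exact hne ⟨ha0, hb0, by rw [hc', hc0, mul_zero]⟩
  have haP : (P * (a * F)).IsHomogeneous m := by
    have : P * (a * F) = a * (P * F) := by ring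
    rw [this]; exact ha
  have hbP : (P * (b * G)).IsHomogeneous m := by
    have : P * (b * G) = b * (P * G) := by ring
    rw [this]; exact hb
  have hcP : (P * (c' * H)).IsHomogeneous m := by
    have : P * (c' * H) = c * H := by rw [hc']; ring
    rw [this]; exact hc
  have hle : dP ≤ m := by
    by_cases ha0 : a = 0
    · by_cases hb0 : b = 0
      · have hc0 : c' ≠ 0 := fun h' => hne' ⟨ha0, hb0, h'⟩
        exact (homog_cancel hP' hP0 (mul_ne_zero hc0 hH0) hcP).1
      · exact (homog_cancel hP' hP0 (mul_ne_zero hb0 hG0) hbP).1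
    · exact (homog_cancel hP' hP0 (mul_ne_zero ha0 hF0) haP).1
  refine ⟨hle, a, b, c', hne', heq', ?_, ?_, ?_⟩
  · by_cases h0 : a * F = 0
    · rw [h0]; exact isHomogeneous_zero _ _ _
    · exact (homog_cancel hP' hP0 h0 haP).2
  · by_cases h0 : b * G = 0
    · rw [h0]; exact isHomogeneous_zero _ _ _
    · exact (homog_cancel hP' hP0 h0 hbP).2
  · by_cases h0 : c' * H = 0
    · rw [h0]; exact isHomogeneous_zero _ _ _
    · exact (homog_cancel hP' hP0 h0 hcP).2

theorem stmt3 {k : Type*} [Field k] (F G H P : MvPolynomial (Fin 2) k)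
    (hF0 : F ≠ 0) (hG0 : G ≠ 0) (hH0 : H ≠ 0) (hP0 : P ≠ 0)
    (hF : ∃ d, F.IsHomogeneous d) (hG : ∃ d, G.IsHomogeneous d) (hH : ∃ d, H.IsHomogeneous d)
    (hP : ∃ d, P.IsHomogeneous d)
    (hcop : ∀ Q : MvPolynomial (Fin 2) k, Q ∣ P → Q ∣ H → IsUnit Q) :
    sdelta (P * F) (P * G) H = sdelta F G H := by
  obtain ⟨dF, hF'⟩ := hF
  obtain ⟨dG, hG'⟩ := hG
  obtain ⟨dH, hH'⟩ := hH
  obtain ⟨dP, hP'⟩ := hP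
  -- nonemptiness of the syzygy set for (F,G,H)
  have hSne : {m | IsSyzOfDeg F G H m}.Nonempty := by
    refine ⟨dF + dG, G, -F, 0, ?_, by ring, ?_, ?_, ?_⟩
    · rintro ⟨h', _, _⟩; exact hG0 h'
    · rw [add_comm]; exact hG'.mul hF'
    · have : (-F) * G = -(F * G) := by ring
      rw [this]; exact (hF'.mul hG').neg
    · rw [zero_mul]; exact isHomogeneous_zero _ _ _
  have hS'ne : {m | IsSyzOfDeg (P * F) (P * G) H m}.Nonempty :=
    ⟨_, syz_forward hP' hP0 hSne.choose_spec⟩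
  -- minSyzDeg equality
  have hmin : minSyzDeg (P * F) (P * G) H = minSyzDeg F G H + dP := by
    have h1 : minSyzDeg (P * F) (P * G) H ≤ minSyzDeg F G H + dP :=
      Nat.sInf_le (syz_forward hP' hP0 (Nat.sInf_mem hSne))
    have hmem := Nat.sInf_mem hS'ne
    obtain ⟨hle, hmem'⟩ := syz_backward hP' hP0 hF0 hG0 hH0 hcop hmem
    have hle' : dP ≤ minSyzDeg (P * F) (P * G) H := hle
    have h2 : minSyzDeg F G H ≤ minSyzDeg (P * F) (P * G) H - dP := Nat.sInf_le hmem'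
    omega
  -- total degrees
  have hPF : (P * F).totalDegree = dP + dF :=
    (hP'.mul hF').totalDegree (mul_ne_zero hP0 hF0)
  have hPG : (P * G).totalDegree = dP + dG :=
    (hP'.mul hG').totalDegree (mul_ne_zero hP0 hG0)
  unfold sdelta
  rw [hmin, hPF, hPG, hF'.totalDegree hF0, hG'.totalDegree hG0]
  push_cast
  ring

end
end

section
/- Let F, G, H, P ∈ k[x,y] be nonzero homogeneous polynomials. Then |δ(F,G,PH) − δ(F,G,H)| ≤ deg P. -/
open MvPolynomial Classical

noncomputable section

theorem stmt4 {k : Type*} [Field k] (F G H P : MvPolynomial (Fin 2) k) (dP : ℕ)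
    (hF0 : F ≠ 0) (hG0 : G ≠ 0) (hH0 : H ≠ 0) (hP0 : P ≠ 0)
    (hF : ∃ d, F.IsHomogeneous d) (hG : ∃ d, G.IsHomogeneous d) (hH : ∃ d, H.IsHomogeneous d)
    (hP : P.IsHomogeneous dP) :
    |sdelta F G (P * H) - sdelta F G H| ≤ (dP : ℤ) := by
  obtain ⟨dF, hFd⟩ := hF
  obtain ⟨dG, hGd⟩ := hG
  obtain ⟨dH, hHd⟩ := hH
  set S1 : Set ℕ := {m | IsSyzOfDeg F G H m} with hS1
  set S2 : Set ℕ := {m | IsSyzOfDeg F G (P * H) m} with hS2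
  have hne1 : (dF + dG) ∈ S1 := by
    refine ⟨G, -F, 0, ?_, by ring, ?_, ?_, ?_⟩
    · intro h; exact hG0 h.1
    · rw [mul_comm]; exact hFd.mul hGd
    · rw [neg_mul]; exact (hFd.mul hGd).neg
    · rw [zero_mul]; exact isHomogeneous_zero _ _ _
  have hup : ∀ m ∈ S1, m + dP ∈ S2 := by
    rintro m ⟨a, b, c, hnz, heq, ha, hb, hc⟩
    refine ⟨P * a, P * b, c, ?_, ?_, ?_, ?_, ?_⟩
    · rintro ⟨h1, h2, h3⟩
      exact hnz ⟨by rcases mul_eq_zero.mp h1 with h | h; exact absurd h hP0; exact h,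
        by rcases mul_eq_zero.mp h2 with h | h; exact absurd h hP0; exact h, h3⟩
    · have : P * a * F + P * b * G + c * (P * H) = P * (a * F + b * G + c * H) := by ring
      rw [this, heq, mul_zero]
    · rw [mul_assoc, Nat.add_comm]; exact hP.mul ha
    · rw [mul_assoc, Nat.add_comm]; exact hP.mul hb
    · rw [mul_left_comm, Nat.add_comm]; exact hP.mul hc
  have hdown : ∀ m ∈ S2, m ∈ S1 := by
    rintro m ⟨a, b, c, hnz, heq, ha, hb, hc⟩
    refine ⟨a, b, c * P, ?_, ?_, ha, hb, ?_⟩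
    · rintro ⟨h1, h2, h3⟩
      exact hnz ⟨h1, h2, by rcases mul_eq_zero.mp h3 with h | h; exact h; exact absurd h hP0⟩
    · rw [mul_assoc]; exact heq
    · rw [mul_assoc]; exact hc
  have hne2 : S2.Nonempty := ⟨dF + dG + dP, hup _ hne1⟩
  have h1 : minSyzDeg F G H ≤ minSyzDeg F G (P * H) :=
    Nat.sInf_le (hdown _ (Nat.sInf_mem hne2))
  have h2 : minSyzDeg F G (P * H) ≤ minSyzDeg F G H + dP :=
    Nat.sInf_le (hup _ (Nat.sInf_mem ⟨_, hne1⟩))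
  have hdPH : (P * H).totalDegree = dP + dH := by
    exact (hP.mul hHd).totalDegree (mul_ne_zero hP0 hH0)
  have hdH : H.totalDegree = dH := hHd.totalDegree hH0
  unfold sdelta
  rw [hdPH, hdH]
  rw [abs_le]
  constructor <;> push_cast <;> omega

end
end

section
/- Suppose k has characteristic p > 0 and let F, G, H ∈ k[x,y] be nonzero homogeneous polynomials. Then δ(F^p, G^p, H^p) = p·δ(F,G,H). -/
/-!
Raising a syzygy of `(F, G, H)` to the `p`-th power gives a syzygy of `(Fᵖ, Gᵖ, Hᵖ)`, so
`m(Fᵖ, Gᵖ, Hᵖ) ≤ p · m(F, G, H)`. For the converse, fix a basis `(bᵢ)` of `k` over `kᵖ`: then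
`k[x, y]` is free over its subring of `p`-th powers with basis `bᵢ xᵛ` (`0 ≤ vⱼ < p`), and the
coordinate maps `T_{v,i}`, defined by `A = ∑ bᵢ xᵛ (T_{v,i} A)ᵖ`, are additive, satisfy
`T_{v,i} (A Qᵖ) = T_{v,i} A · Q` and send forms of degree `M` to forms of degree `(M - |v|) / p`.
A coordinate map that does not kill a given syzygy of `(Fᵖ, Gᵖ, Hᵖ)` of degree `M` turns it into
a syzygy of `(F, G, H)` of degree at most `M / p`. Hence `m` is multiplied by `p`, and so are the
degrees of `F`, `G`, `H`.
-/

open MvPolynomial Classical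

noncomputable section

section Finsupp

variable {σ : Type*} {p : ℕ}

lemma nsmul_add_injective (hp : p ≠ 0) (v : σ →₀ ℕ) :
    Function.Injective fun q : σ →₀ ℕ ↦ p • q + v :=
  (add_left_injective v).comp (smul_right_injective _ hp)

lemma exists_nsmul_add_eq (hp : p ≠ 0) (n : σ →₀ ℕ) :
    ∃ q v : σ →₀ ℕ, (∀ j, v j < p) ∧ p • q + v = n :=
  ⟨n.mapRange (· / p) (Nat.zero_div p), n.mapRange (· % p) (Nat.zero_mod p),
    fun j ↦ Nat.mod_lt _ (Nat.pos_of_ne_zero hp), by ext j; simp [Nat.div_add_mod]⟩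

lemma nsmul_le_nsmul_add_iff {u q v : σ →₀ ℕ} (hv : ∀ j, v j < p) :
    p • u ≤ p • q + v ↔ u ≤ q := by
  refine ⟨fun h j ↦ ?_, fun h j ↦ ?_⟩
  · have hj := h j
    simp only [Finsupp.add_apply, Finsupp.smul_apply, smul_eq_mul] at hj
    have hlt : p * u j < p * (q j + 1) := by
      rw [Nat.mul_succ]
      exact hj.trans_lt (Nat.add_lt_add_left (hv j) _)
    exact Nat.lt_succ_iff.1 (Nat.lt_of_mul_lt_mul_left hlt)
  · have := Nat.mul_le_mul_left p (h j)
    simp only [Finsupp.add_apply, Finsupp.smul_apply, smul_eq_mul]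
    omega

lemma nsmul_add_tsub_nsmul {u q : σ →₀ ℕ} (v : σ →₀ ℕ) (h : u ≤ q) :
    p • q + v - p • u = p • (q - u) + v := by
  ext j
  have := Nat.mul_le_mul_left p (h j)
  simp only [Finsupp.tsub_apply, Finsupp.add_apply, Finsupp.smul_apply, smul_eq_mul, Nat.mul_sub]
  omega

end Finsupp

section FrobeniusCoordinates

variable (k : Type*) [Field k] (p : ℕ) [ExpChar k p]

abbrev frobeniusBasis :
    Module.Basis (Module.Basis.ofVectorSpaceIndex (frobenius k p).fieldRange k)
      (frobenius k p).fieldRange k :=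
  Module.Basis.ofVectorSpace _ k

variable {k} (i : Module.Basis.ofVectorSpaceIndex (frobenius k p).fieldRange k)

/-- The `p`-th root of the `i`-th coordinate over `kᵖ`. -/
def frobeniusCoord : k →+ k :=
  (frobenius k p).rangeRestrictFieldEquiv.symm.toAddMonoidHom.comp
    ((frobeniusBasis k p).coord i).toAddMonoidHom

lemma frobeniusCoord_pow_mul (c z : k) :
    frobeniusCoord p i (c ^ p * z) = c * frobeniusCoord p i z := by
  have hc : c ^ p * z = (frobenius k p).rangeRestrictFieldEquiv c • z := rfl
  simp [frobeniusCoord, hc]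

lemma exists_frobeniusCoord_ne_zero {z : k} (hz : z ≠ 0) :
    ∃ i, frobeniusCoord p i z ≠ 0 := by
  obtain ⟨i, hi⟩ : ∃ i, (frobeniusBasis k p).repr z i ≠ 0 := by
    by_contra! h
    exact hz ((frobeniusBasis k p).repr.map_eq_zero_iff.1 (Finsupp.ext h))
  exact ⟨i, by simpa [frobeniusCoord] using hi⟩

end FrobeniusCoordinates

section FrobeniusDescent

variable {σ k : Type*} [Field k] (p : ℕ) [ExpChar k p]
  (i : Module.Basis.ofVectorSpaceIndex (frobenius k p).fieldRange k)

/-- The coordinate map `T_{v,i}` of `A = ∑ bᵢ xᵛ (T_{v,i} A)ᵖ`. -/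
def frobeniusDescent (v : σ →₀ ℕ) : MvPolynomial σ k →+ MvPolynomial σ k :=
  AddMonoidAlgebra.coeffAddEquiv.symm.toAddMonoidHom.comp <|
    (Finsupp.mapRange.addMonoidHom (frobeniusCoord p i)).comp <|
      (Finsupp.comapDomain.addMonoidHom (nsmul_add_injective (expChar_pos k p).ne' v)).comp
        AddMonoidAlgebra.coeffAddEquiv.toAddMonoidHom

lemma coeff_frobeniusDescent (v : σ →₀ ℕ) (A : MvPolynomial σ k) (q : σ →₀ ℕ) :
    coeff q (frobeniusDescent p i v A) = frobeniusCoord p i (coeff (p • q + v) A) :=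
  rfl

lemma frobeniusDescent_mul_pow {v : σ →₀ ℕ} (hv : ∀ j, v j < p) (A Q : MvPolynomial σ k) :
    frobeniusDescent p i v (A * Q ^ p) = frobeniusDescent p i v A * Q := by
  induction Q using MvPolynomial.induction_on' with
  | monomial u c =>
    ext q
    rw [monomial_pow, coeff_frobeniusDescent, coeff_mul_monomial', coeff_mul_monomial']
    simp only [nsmul_le_nsmul_add_iff hv]
    split_ifs with h
    · rw [nsmul_add_tsub_nsmul v h, mul_comm, frobeniusCoord_pow_mul, coeff_frobeniusDescent,
        mul_comm]
    · exact map_zero _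
  | add Q₁ Q₂ h₁ h₂ => rw [add_pow_expChar, mul_add, map_add, h₁, h₂, mul_add]

lemma MvPolynomial.IsHomogeneous.frobeniusDescent {A : MvPolynomial σ k} {E : ℕ}
    (hA : A.IsHomogeneous E) (v : σ →₀ ℕ) :
    (frobeniusDescent p i v A).IsHomogeneous ((E - Finsupp.weight 1 v) / p) := by
  intro q hq
  rw [coeff_frobeniusDescent] at hq
  have hE := hA fun h ↦ hq (by rw [h, map_zero])
  rw [map_add, map_nsmul, smul_eq_mul] at hE
  rw [← hE, Nat.add_sub_cancel, Nat.mul_div_cancel_left _ (expChar_pos k p)]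

lemma eq_zero_of_forall_frobeniusDescent_eq_zero {A : MvPolynomial σ k}
    (h : ∀ i v, (∀ j, v j < p) → frobeniusDescent p i v A = 0) : A = 0 := by
  ext n
  obtain ⟨q, v, hv, rfl⟩ := exists_nsmul_add_eq (expChar_pos k p).ne' n
  by_contra hn
  obtain ⟨i, hi⟩ := exists_frobeniusCoord_ne_zero p hn
  exact hi (by rw [← coeff_frobeniusDescent, h i v hv, coeff_zero])

end FrobeniusDescent

section Syzygies

variable {k : Type*} [Field k] (p : ℕ) [ExpChar k p] {F G H : MvPolynomial (Fin 2) k}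

lemma IsSyzOfDeg.pow_expChar {m : ℕ} (h : IsSyzOfDeg F G H m) :
    IsSyzOfDeg (F ^ p) (G ^ p) (H ^ p) (p * m) := by
  obtain ⟨a, b, c, hne, hrel, ha, hb, hc⟩ := h
  have hp : p ≠ 0 := (expChar_pos k p).ne'
  refine ⟨a ^ p, b ^ p, c ^ p, ?_, ?_, ?_, ?_, ?_⟩
  · simpa [pow_eq_zero_iff hp] using hne
  · rw [← mul_pow, ← mul_pow, ← mul_pow, ← add_pow_expChar, ← add_pow_expChar, hrel,
      zero_pow hp]
  all_goals rw [← mul_pow, mul_comm p m]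
  exacts [ha.pow p, hb.pow p, hc.pow p]

lemma IsSyzOfDeg.of_pow_expChar {M : ℕ} (h : IsSyzOfDeg (F ^ p) (G ^ p) (H ^ p) M) :
    ∃ M', p * M' ≤ M ∧ IsSyzOfDeg F G H M' := by
  obtain ⟨a, b, c, hne, hrel, ha, hb, hc⟩ := h
  obtain ⟨i, v, hv, hD⟩ : ∃ i v, (∀ j, v j < p) ∧
      ¬(frobeniusDescent p i v a = 0 ∧ frobeniusDescent p i v b = 0 ∧
        frobeniusDescent p i v c = 0) := by
    by_contra! h
    exact hne ⟨eq_zero_of_forall_frobeniusDescent_eq_zero p fun i v hv ↦ (h i v hv).1,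
      eq_zero_of_forall_frobeniusDescent_eq_zero p fun i v hv ↦ (h i v hv).2.1,
      eq_zero_of_forall_frobeniusDescent_eq_zero p fun i v hv ↦ (h i v hv).2.2⟩
  have hrel' := congrArg (frobeniusDescent p i v) hrel
  simp only [map_add, map_zero, frobeniusDescent_mul_pow p i hv] at hrel'
  refine ⟨(M - Finsupp.weight 1 v) / p, (Nat.mul_div_le _ _).trans (Nat.sub_le _ _),
    _, _, _, hD, hrel', ?_, ?_, ?_⟩
  all_goals rw [← frobeniusDescent_mul_pow p i hv]
  exacts [ha.frobeniusDescent p i v, hb.frobeniusDescent p i v, hc.frobeniusDescent p i v]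

lemma minSyzDeg_pow_expChar :
    minSyzDeg (F ^ p) (G ^ p) (H ^ p) = p * minSyzDeg F G H := by
  by_cases hS : {m | IsSyzOfDeg F G H m}.Nonempty
  · have hmin := (Nat.sInf_mem hS).pow_expChar p
    refine le_antisymm (Nat.sInf_le hmin) (le_csInf ⟨_, hmin⟩ fun M hM ↦ ?_)
    obtain ⟨M', hle, hM'⟩ := IsSyzOfDeg.of_pow_expChar p hM
    exact (Nat.mul_le_mul_left p (Nat.sInf_le hM')).trans hle
  · have hSp : {M | IsSyzOfDeg (F ^ p) (G ^ p) (H ^ p) M} = ∅ :=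
      Set.eq_empty_of_forall_notMem fun M hM ↦
        hS ((IsSyzOfDeg.of_pow_expChar p hM).imp fun _ ↦ And.right)
    rw [minSyzDeg, minSyzDeg, hSp, Set.not_nonempty_iff_eq_empty.1 hS, Nat.sInf_empty, mul_zero]

end Syzygies

lemma MvPolynomial.totalDegree_pow_of_isDomain {σ R : Type*} [CommRing R] [IsDomain R]
    (F : MvPolynomial σ R) (n : ℕ) : (F ^ n).totalDegree = n * F.totalDegree := by
  rcases eq_or_ne F 0 with rfl | hF
  · cases n <;> simp
  induction n with
  | zero => simp
  | succ n ih => rw [pow_succ, totalDegree_mul_of_isDomain (pow_ne_zero n hF) hF, ih, Nat.succ_mul]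

theorem stmt8_general (p : ℕ) {k : Type*} [Field k] [CharP k p] (hp : 0 < p)
    (F G H : MvPolynomial (Fin 2) k) :
    sdelta (F ^ p) (G ^ p) (H ^ p) = p * sdelta F G H := by
  have : Fact p.Prime := ⟨(CharP.char_is_prime_or_zero k p).resolve_right hp.ne'⟩
  simp only [sdelta, minSyzDeg_pow_expChar, totalDegree_pow_of_isDomain]
  push_cast
  ring

theorem stmt8 (p : ℕ) {k : Type*} [Field k] [CharP k p] (hp : 0 < p)
    (F G H : MvPolynomial (Fin 2) k)
    (hF0 : F ≠ 0) (hG0 : G ≠ 0) (hH0 : H ≠ 0)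
    (hF : ∃ d, F.IsHomogeneous d) (hG : ∃ d, G.IsHomogeneous d) (hH : ∃ d, H.IsHomogeneous d) :
    sdelta (F ^ p) (G ^ p) (H ^ p) = p * sdelta F G H :=
  stmt8_general p hp F G H

end
end
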